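/- arXiv:1506.06275 — 2 statements merged into one kernel-verified Lean document; each statement's English description precedes it below -/
import Mathlib

section
/- Every opaque history is last-use opaque: for every prefix-closed set 𝓔 of histories and every H ∈ 𝓔, if H is opaque, then H is last-use opaque with respect to 𝓔. -/
/-!
Formal model of transactional memory (TM) histories, following Siek &
Wojciechowski, "Last-use Opacity: A Strong Safety Property for Transactional
Memory with Early Release Support".

Transactions and shared variables are indexed by natural numbers; values of
variables are natural numbers with initial value 0.
-/

namespace TM

open Classical

/-- Transactional operations: `init`, read of a variable, write of a value to
a variable, `tryCommit` and `tryAbort`. -/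
inductive Op : Type
  | init : Op
  | read : ℕ → Op
  | write : ℕ → ℕ → Op
  | tryCommit : Op
  | tryAbort : Op
  deriving DecidableEq

/-- Responses: `ok`, a value (for reads), commit `C_i`, abort `A_i`. -/
inductive Resp : Type
  | ok : Resp
  | value : ℕ → Resp
  | committed : Resp
  | aborted : Resp
  deriving DecidableEq

/-- Invocation and response events, tagged with the transaction executing them. -/
inductive Event : Type
  | inv : ℕ → Op → Event
  | res : ℕ → Resp → Event
  deriving DecidableEq

/-- The transaction executing an event. -/
def Event.txn : Event → ℕ
  | .inv t _ => t
  | .res t _ => t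

/-- A history is a finite sequence of events. -/
abbrev History := List Event

/-- `proj i H` is `H|T_i`, the subsequence of events of transaction `i`. -/
def proj (i : ℕ) (H : History) : History :=
  H.filter (fun e => e.txn == i)

/-- Transaction `i` is in `H` (`H|T_i ≠ ∅`). -/
def inTxn (H : History) (i : ℕ) : Prop := proj i H ≠ []

/-- `T_i` is committed in `H`: `H|T_i` contains `tryC_i → C_i`. -/
def committed (H : History) (i : ℕ) : Prop :=
  List.Sublist [Event.inv i Op.tryCommit, Event.res i Resp.committed] (proj i H)

/-- `T_i` is aborted in `H`: `H|T_i` contains a response `A_i`. -/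
def aborted (H : History) (i : ℕ) : Prop :=
  Event.res i Resp.aborted ∈ proj i H

/-- `T_i` is commit-pending in `H`. -/
def commitPending (H : History) (i : ℕ) : Prop :=
  Event.inv i Op.tryCommit ∈ proj i H ∧
    Event.res i Resp.committed ∉ proj i H ∧ Event.res i Resp.aborted ∉ proj i H

/-- `T_i` is live in `H`. -/
def live (H : History) (i : ℕ) : Prop :=
  inTxn H i ∧ ¬ committed H i ∧ ¬ aborted H i ∧ ¬ commitPending H i

/-- A complete operation execution by transaction `i` in `H`: the invocation
is at position `ki`, its matching response at position `kr` (no events of `i`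
in between). -/
def opExec (H : History) (i ki kr : ℕ) (o : Op) (r : Resp) : Prop :=
  ki < kr ∧ H[ki]? = some (Event.inv i o) ∧ H[kr]? = some (Event.res i r) ∧
    ∀ (m : ℕ) (e : Event), ki < m → m < kr → H[m]? = some e → e.txn ≠ i

def isInvEvent : Event → Prop
  | .inv _ _ => True
  | .res _ _ => False

def isResEvent : Event → Prop
  | .inv _ _ => False
  | .res _ _ => True

/-- Well-formedness of `H|T_i` (as the list `L`): alternation of invocations
and responses starting with `init_i`, no events after a commit/abort response,
and no invocation after an invocation of `tryC_i` or `tryA_i`. -/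
def wellFormedTxn (L : History) (i : ℕ) : Prop :=
  (∀ (k : ℕ) (e : Event), L[k]? = some e →
      ((k % 2 = 0 → isInvEvent e) ∧ (k % 2 = 1 → isResEvent e))) ∧
  (L ≠ [] → L[0]? = some (Event.inv i Op.init)) ∧
  (∀ k : ℕ, (L[k]? = some (Event.res i Resp.committed) ∨
      L[k]? = some (Event.res i Resp.aborted)) → L.length = k + 1) ∧
  (∀ (k : ℕ) (o : Op), L[k]? = some (Event.inv i o) → (o = Op.tryCommit ∨ o = Op.tryAbort) →
      ∀ (m : ℕ) (o' : Op), L[m]? = some (Event.inv i o') → m ≤ k)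

/-- A well-formed history. -/
def wellFormed (H : History) : Prop :=
  ∀ i : ℕ, wellFormedTxn (proj i H) i

/-- Unique writes: distinct write executions write distinct values, all
different from the initial value 0. -/
def uniqueWrites (H : History) : Prop :=
  ∀ (k1 k2 i1 i2 x1 x2 v1 v2 : ℕ),
    H[k1]? = some (Event.inv i1 (Op.write x1 v1)) →
    H[k2]? = some (Event.inv i2 (Op.write x2 v2)) →
    v1 ≠ 0 ∧ (k1 ≠ k2 → v1 ≠ v2)

/-- Two histories are equivalent if they agree on every `H|T_i`. -/
def equivH (H1 H2 : History) : Prop := ∀ i : ℕ, proj i H1 = proj i H2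

/-- Real-time precedence: the last event of `H|T_i` precedes the first event
of `H|T_j` in `H`. -/
def rtPrec (H : History) (i j : ℕ) : Prop :=
  ∃ k l : ℕ, k < l ∧
    (∃ e : Event, H[k]? = some e ∧ e.txn = i) ∧
    (∃ e : Event, H[l]? = some e ∧ e.txn = j) ∧
    (∀ (m : ℕ) (e : Event), H[m]? = some e → e.txn = i → m ≤ k) ∧
    (∀ (m : ℕ) (e : Event), H[m]? = some e → e.txn = j → l ≤ m)

/-- `S` preserves the real-time order of `H`. -/
def preservesRT (H S : History) : Prop := ∀ i j : ℕ, rtPrec H i j → rtPrec S i j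

/-- A sequential history: any two distinct transactions are comparable in the
real-time order. -/
def sequential (S : History) : Prop :=
  ∀ i j : ℕ, inTxn S i → inTxn S j → i ≠ j → rtPrec S i j ∨ rtPrec S j i

/-- The read of value `v` on variable `x` invoked at position `ki` is
consistent with the sequential specification of `x`: the latest write to `x`
completed before it writes `v`, or there is no such write and `v = 0`. -/
def readsLegally (S : History) (x v ki : ℕ) : Prop :=
  (∃ j kwi kwr : ℕ, kwr < ki ∧ opExec S j kwi kwr (Op.write x v) Resp.ok ∧
      ∀ j' v' kwi' kwr' : ℕ,
        opExec S j' kwi' kwr' (Op.write x v') Resp.ok → kwr' < ki → kwr' ≤ kwr)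
  ∨ (v = 0 ∧ ∀ j v' kwi kwr : ℕ, opExec S j kwi kwr (Op.write x v') Resp.ok → ¬ kwr < ki)

/-- A (sequential) history is legal if its restriction to every variable is in
the variable's sequential specification, i.e. every complete read is
consistent with the latest preceding write. -/
def isLegal (S : History) : Prop :=
  ∀ i x v ki kr : ℕ, opExec S i ki kr (Op.read x) (Resp.value v) → readsLegally S x v ki

/-- Transaction `i` has the pending (unanswered) invocation of `o` in `H`. -/
def pendingInv (H : History) (i : ℕ) (o : Op) : Prop :=
  (proj i H).getLast? = some (Event.inv i o)

/-- `C` is a completion `Compl(H)` of `H`. -/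
def isCompletion (H C : History) : Prop :=
  H <+: C ∧
  (∀ i : ℕ, inTxn C i → inTxn H i) ∧
  (∀ i : ℕ, inTxn C i → committed C i ∨ aborted C i) ∧
  ∀ i : ℕ, inTxn H i →
    ((committed H i ∨ aborted H i) → proj i C = proj i H) ∧
    (¬ committed H i → ¬ aborted H i →
      (pendingInv H i Op.tryCommit →
          proj i C = proj i H ++ [Event.res i Resp.committed]) ∧
      ((∃ o : Op, o ≠ Op.tryCommit ∧ pendingInv H i o) →
          proj i C = proj i H ++ [Event.res i Resp.aborted]) ∧
      ((¬ ∃ o : Op, pendingInv H i o) →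
          proj i C = proj i H ++ [Event.inv i Op.tryCommit, Event.res i Resp.aborted]))

/-- Restriction of a history to the events of a set of transactions. -/
noncomputable def restrictTxns (S : History) (T : Set ℕ) : History :=
  S.filter (fun e => decide (e.txn ∈ T))

/-- `Vis(S,T_i)`: the longest subhistory of `S` containing, for each `T_j` in
`S`, the events of `T_j` iff `j = i` or (`T_j` is committed and `T_j ≺_S T_i`). -/
noncomputable def Vis (S : History) (i : ℕ) : History :=
  restrictTxns S {j | j = i ∨ (committed S j ∧ rtPrec S j i)}

/-- `T_i` is legal in `S` if `Vis(S,T_i)` is legal. -/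
def legalIn (S : History) (i : ℕ) : Prop := isLegal (Vis S i)

/-- Serializability. -/
def serializable (H : History) : Prop :=
  ∃ C S : History, isCompletion H C ∧ sequential S ∧ equivH S C ∧
    ∀ i : ℕ, inTxn S i → committed S i → legalIn S i

/-- The read invoked at position `ki` by `T_j` on `x` is non-local: no write
to `x` by `T_j` precedes it. -/
def nonLocalReadAt (H : History) (j x ki : ℕ) : Prop :=
  ∀ m v : ℕ, m < ki → H[m]? ≠ some (Event.inv j (Op.write x v))

/-- `T_i` releases variable `x` early in `H`. -/
def releasesEarly (H : History) (i x : ℕ) : Prop :=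
  ∃ P : History, P <+: H ∧ live P i ∧
    ∃ j v wki wkr rki rkr : ℕ, j ≠ i ∧
      opExec P i wki wkr (Op.write x v) Resp.ok ∧
      opExec P j rki rkr (Op.read x) (Resp.value v) ∧
      nonLocalReadAt P j x rki ∧
      wkr < rki

/-- Overwriting by `T_i` observed by `T_j` on variable `x` in `H`. -/
def overwriting (H : History) (i j x : ℕ) : Prop :=
  i ≠ j ∧ releasesEarly H i x ∧
  ∃ v v' k1i k1r k2i k2r kri krr : ℕ,
    opExec H i k1i k1r (Op.write x v) Resp.ok ∧
    opExec H i k2i k2r (Op.write x v') Resp.ok ∧ k1r < k2i ∧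
    opExec H j kri krr (Op.read x) (Resp.value v) ∧ krr < k2i

/-- Final-state opacity. -/
def finalStateOpaque (H : History) : Prop :=
  ∃ C S : History, isCompletion H C ∧ sequential S ∧ equivH S C ∧ preservesRT H S ∧
    ∀ i : ℕ, inTxn S i → legalIn S i

/-- Opacity: every finite prefix is final-state opaque. -/
def isOpaque (H : History) : Prop := ∀ P : History, P <+: H → finalStateOpaque P

/-- Causal past of `T_i` in `H`: `T_i` together with the committed or aborted
transactions that precede `T_i` in `H`. -/
def causalPast (H : History) (i : ℕ) : Set ℕ :=
  {j | j = i ∨ ((committed H j ∨ aborted H j) ∧ rtPrec H j i)}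

/-- Virtual world consistency. -/
def VWC (H : History) : Prop :=
  (∃ S : History, sequential S ∧ equivH S (restrictTxns H {j | committed H j}) ∧
      preservesRT H S ∧ ∀ j : ℕ, inTxn S j → committed S j → legalIn S j) ∧
  (∀ i : ℕ, inTxn H i → aborted H i →
      ∃ S : History, sequential S ∧ equivH S (restrictTxns H (causalPast H i)) ∧ isLegal S)

/-! ### Live opacity -/

/-- Index `k` of `L` carries (part of) a read operation execution. -/
def isReadIdx (L : History) (k : ℕ) : Prop :=
  (∃ t x : ℕ, L[k]? = some (Event.inv t (Op.read x))) ∨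
  (1 ≤ k ∧ (∃ t x : ℕ, L[k-1]? = some (Event.inv t (Op.read x))) ∧
    ∃ (t : ℕ) (r : Resp), L[k]? = some (Event.res t r))

/-- Index `k` of `L` carries (part of) a non-local read operation execution. -/
def isNonLocalReadIdx (L : History) (k : ℕ) : Prop :=
  (∃ t x : ℕ, L[k]? = some (Event.inv t (Op.read x)) ∧
      ∀ m t' v : ℕ, m < k → L[m]? ≠ some (Event.inv t' (Op.write x v))) ∨
  (1 ≤ k ∧ (∃ (t : ℕ) (r : Resp), L[k]? = some (Event.res t r)) ∧
    ∃ t x : ℕ, L[k-1]? = some (Event.inv t (Op.read x)) ∧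
      ∀ m t' v : ℕ, m < k - 1 → L[m]? ≠ some (Event.inv t' (Op.write x v)))

/-- The subsequence of `L` of events at indices satisfying `p`. -/
noncomputable def seqOfIdx (L : History) (p : ℕ → Prop) : History :=
  ((List.range L.length).filter (fun k => decide (p k))).filterMap (fun k => L[k]?)

/-- `H|(T_i,r)`: the read operation executions of `T_i`, excluding the last
read if its response is `A_i`. -/
noncomputable def readSeq (H : History) (i : ℕ) : History :=
  let L := proj i H
  let R := seqOfIdx L (isReadIdx L)
  if R.getLast? = some (Event.res i Resp.aborted) then R.dropLast.dropLast else R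

/-- `H|(T_i,gr)`: the non-local read operation executions of `T_i`, excluding
the last read if its response is `A_i`. -/
noncomputable def grSeq (H : History) (i : ℕ) : History :=
  let L := proj i H
  let R := seqOfIdx L (isNonLocalReadIdx L)
  if R.getLast? = some (Event.res i Resp.aborted) then R.dropLast.dropLast else R

/-- The transaction `T_i^gr`. -/
noncomputable def grTxn (H : History) (i : ℕ) : History :=
  if grSeq H i = [] then []
  else [Event.inv i Op.init, Event.res i Resp.ok] ++ grSeq H i ++
       [Event.inv i Op.tryCommit, Event.res i Resp.committed]

/-- `S` justifies the serializability of `H`. -/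
def justifiesSer (S H : History) : Prop :=
  ∃ H' : History, List.Sublist H' H ∧ (∀ e ∈ H', committed H e.txn) ∧
    (∀ j : ℕ, committed H j → proj j H' = proj j H) ∧
    isLegal S ∧ equivH S H'

/-- All complete local reads of `T_i` in `H` have legal responses: the last
preceding write of `T_i` to the variable wrote the value read. -/
def localReadsLegal (H : History) (i : ℕ) : Prop :=
  ∀ x v ki kr : ℕ, opExec (proj i H) i ki kr (Op.read x) (Resp.value v) →
    (∃ m w : ℕ, m < ki ∧ (proj i H)[m]? = some (Event.inv i (Op.write x w))) →
    ∃ m : ℕ, m < ki ∧ (proj i H)[m]? = some (Event.inv i (Op.write x v)) ∧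
      ∀ m' w' : ℕ, m < m' → m' < ki → (proj i H)[m']? ≠ some (Event.inv i (Op.write x w'))

/-- Live opacity. -/
def liveOpaque (H : History) : Prop :=
  ∃ S : History, sequential S ∧ preservesRT H S ∧ justifiesSer S H ∧
    (∃ S' : History, sequential S' ∧ List.Sublist S S' ∧
      (∀ i : ℕ, inTxn H i → ¬ inTxn S i → proj i S' = grTxn H i) ∧
      (∀ i j : ℕ, rtPrec H i j → inTxn S' i → inTxn S' j → rtPrec S' i j) ∧
      isLegal S') ∧
    (∀ i : ℕ, inTxn H i → ¬ inTxn S i → localReadsLegal H i)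

/-! ### Last-use opacity -/

/-- A prefix-closed set of histories (the possible histories of a program). -/
def prefixClosed (E : Set History) : Prop :=
  ∀ H ∈ E, ∀ P : History, P <+: H → P ∈ E

/-- The write execution on `x` by `T_i` at positions `(ki,kr)` is the closing
("last") write on `x` by `T_i` in `H` with respect to the possible histories
`E`: in no extension of `H` in `E` does `T_i` invoke another write on `x`
after it. -/
def closingWrite (E : Set History) (H : History) (i x v ki kr : ℕ) : Prop :=
  opExec H i ki kr (Op.write x v) Resp.ok ∧
  ∀ H' ∈ E, H <+: H' → ∀ m v' : ℕ, H'[m]? = some (Event.inv i (Op.write x v')) → m ≤ ki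

/-- `T_i` decided on `x` in `H` (w.r.t. `E`). -/
def decidedOn (E : Set History) (H : History) (i x : ℕ) : Prop :=
  ∃ v ki kr : ℕ, closingWrite E H i x v ki kr

/-- The variable accessed by an operation. -/
def opVar : Op → Option ℕ
  | .read x => some x
  | .write x _ => some x
  | _ => none

/-- The variable accessed by the event at index `k` of `L` (for a response,
the variable of the matching invocation at `k-1`). -/
def eventVarAt (L : History) (k : ℕ) : Option ℕ :=
  match L[k]? with
  | some (Event.inv _ o) => opVar o
  | some (Event.res _ _) =>
      match L[k-1]? with
      | some (Event.inv _ o) => opVar o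
      | _ => none
  | none => none

/-- The operation execution starting at index `k` of `L` is complete. -/
def completeAt (L : History) (k : ℕ) : Prop :=
  ∀ (t : ℕ) (o : Op), L[k]? = some (Event.inv t o) →
    ∃ (t' : ℕ) (r : Resp), L[k+1]? = some (Event.res t' r)

/-- `Hs⌊T_i` (decided transaction subhistory): the subsequence of `Hs|T_i`
consisting of `init_i` and all complete operation executions on variables on
which `T_i` decided (decidedness judged in `Hd` w.r.t. `E`). -/
noncomputable def lastUseProj (E : Set History) (Hd Hs : History) (i : ℕ) : History :=
  let L := proj i Hs
  seqOfIdx L (fun k => completeAt L k ∧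
    (k ≤ 1 ∨ ∃ x : ℕ, eventVarAt L k = some x ∧ decidedOn E Hd i x))

/-- `Hs⌊^T_i = Hs⌊T_i · [tryC_i → C_i]`. -/
noncomputable def lastUseProjC (E : Set History) (Hd Hs : History) (i : ℕ) : History :=
  lastUseProj E Hd Hs i ++ [Event.inv i Op.tryCommit, Event.res i Resp.committed]

/-- Transactions of a history in order of first occurrence. -/
def txnOrder : History → List ℕ
  | [] => []
  | e :: t => e.txn :: (txnOrder t).filter (fun j => j ≠ e.txn)

/-- The candidate `LUVis(S,T_i)` determined by a choice `inc` of which decided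
non-committed transactions to include: for each transaction `j` of `S` in
order, all of `S|T_j` if `j = i` or `T_j` is committed in `S` and `T_j ≺_S T_i`;
`S⌊^T_j` if `T_j` is non-committed, decided on some variable in `H`,
`T_j ≺_S T_i`, not `T_j ≺_H T_i`, and `inc j` holds; nothing otherwise. -/
noncomputable def buildLUVis (E : Set History) (H S : History) (i : ℕ)
    (inc : ℕ → Prop) : History :=
  (txnOrder S).flatMap (fun j =>
    if j = i ∨ (committed S j ∧ rtPrec S j i) then proj j S
    else if ¬ committed S j ∧ (∃ x : ℕ, decidedOn E H j x) ∧ rtPrec S j i ∧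
        ¬ rtPrec H j i ∧ inc j
      then lastUseProjC E H S j
    else [])

/-- `T_i` is last-use legal in `S`: some admissible `LUVis(S,T_i)` is legal. -/
def lastUseLegal (E : Set History) (H S : History) (i : ℕ) : Prop :=
  ∃ inc : ℕ → Prop, isLegal (buildLUVis E H S i inc)

/-- Final-state last-use opacity with respect to `E`. -/
def finalStateLUOpaque (E : Set History) (H : History) : Prop :=
  ∃ C S : History, isCompletion H C ∧ sequential S ∧ equivH S C ∧ preservesRT H S ∧
    (∀ i : ℕ, inTxn S i → committed S i → legalIn S i) ∧
    (∀ i : ℕ, inTxn S i → ¬ committed S i → lastUseLegal E H S i)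

/-- Last-use opacity with respect to `E`: every finite prefix is final-state
last-use opaque with respect to `E`. -/
def lastUseOpaque (E : Set History) (H : History) : Prop :=
  ∀ P : History, P <+: H → finalStateLUOpaque E P

/-! ### Database conditions -/

/-- `T_j` reads from `T_i` in `H` (unique writes). -/
def readsFrom (H : History) (j i : ℕ) : Prop :=
  ∃ x v kwi kwr kri krr : ℕ,
    opExec H i kwi kwr (Op.write x v) Resp.ok ∧
    opExec H j kri krr (Op.read x) (Resp.value v)

/-- Recoverability: if `T_j` reads from `T_i` then `T_i` commits before `T_j`
commits. -/
def recoverable (H : History) : Prop :=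
  ∀ i j : ℕ, i ≠ j → readsFrom H j i →
    ∀ kc' : ℕ, H[kc']? = some (Event.res j Resp.committed) →
      ∃ kc : ℕ, kc < kc' ∧ H[kc]? = some (Event.res i Resp.committed)

/-- Avoiding cascading aborts: whenever `T_j` reads `x` from `T_i`, the commit
response `C_i` precedes the read. -/
def ACA (H : History) : Prop :=
  ∀ i j x v kwi kwr kri krr : ℕ, i ≠ j →
    opExec H i kwi kwr (Op.write x v) Resp.ok →
    opExec H j kri krr (Op.read x) (Resp.value v) →
    ∃ m : ℕ, m < kri ∧ H[m]? = some (Event.res i Resp.committed)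

/-- Strictness. -/
def strictH (H : History) : Prop :=
  ∀ i j : ℕ, i ≠ j → ∀ x v v' ki kr kwi kwr : ℕ,
    (opExec H i ki kr (Op.read x) (Resp.value v) ∨ opExec H i ki kr (Op.write x v') Resp.ok) →
    opExec H j kwi kwr (Op.write x v) Resp.ok →
    kwr < ki →
    ∃ m : ℕ, m < ki ∧
      (H[m]? = some (Event.res j Resp.committed) ∨ H[m]? = some (Event.res j Resp.aborted))

end TM

/-!
Choosing to include none of the optional subhistories `S⌊^T_j`, the admissible
`LUVis(S,T_i)` is `Vis(S,T_i)`, so the serialization witnessing final-state opacity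
of a prefix also witnesses its final-state last-use opacity. It remains to see
that listing `S` transaction by transaction, in order of first occurrence as
`buildLUVis` does, reproduces `S`: a sequential history does not interleave its
transactions.
-/

namespace TM

open Classical

def NonInterleaved (S : History) : Prop :=
  ∀ k l m : ℕ, ∀ e₁ e₂ e₃ : Event, k < l → l < m → S[k]? = some e₁ → S[l]? = some e₂ →
    S[m]? = some e₃ → e₃.txn = e₁.txn → e₂.txn = e₁.txn

lemma inTxn_txn_of_mem {S : History} {e : Event} (he : e ∈ S) : inTxn S e.txn :=
  List.ne_nil_of_mem (List.mem_filter.mpr ⟨he, beq_self_eq_true _⟩)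

lemma sequential.nonInterleaved {S : History} (hS : sequential S) : NonInterleaved S := by
  intro k l m e₁ e₂ e₃ hkl hlm h₁ h₂ h₃ h₃₁
  by_contra hne
  rcases hS e₁.txn e₂.txn (inTxn_txn_of_mem (List.mem_of_getElem? h₁))
      (inTxn_txn_of_mem (List.mem_of_getElem? h₂)) (Ne.symm hne) with
    ⟨k', l', hk'l', -, -, hlast, hfirst⟩ | ⟨k', l', hk'l', -, -, hlast, hfirst⟩
  · have := hlast m e₃ h₃ h₃₁
    have := hfirst l e₂ h₂ rfl
    omega
  · have := hlast l e₂ h₂ rfl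
    have := hfirst k e₁ h₁ rfl
    omega

lemma NonInterleaved.tail {e : Event} {t : History} (h : NonInterleaved (e :: t)) :
    NonInterleaved t := fun k l m e₁ e₂ e₃ hkl hlm h₁ h₂ h₃ =>
  h (k + 1) (l + 1) (m + 1) e₁ e₂ e₃ (by omega) (by omega) h₁ h₂ h₃

lemma NonInterleaved.txn_head_eq {e e' x : Event} {t : History}
    (h : NonInterleaved (e :: e' :: t)) (hx : x ∈ e' :: t) (hxe : x.txn = e.txn) :
    e'.txn = e.txn := by
  rcases List.mem_cons.mp hx with rfl | hx
  · exact hxe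
  · obtain ⟨n, hn⟩ := List.mem_iff_getElem?.mp hx
    exact h 0 1 (n + 2) e e' x (by omega) (by omega) rfl rfl hn hxe

lemma mem_txnOrder {j : ℕ} {L : History} (hj : j ∈ txnOrder L) : ∃ e ∈ L, e.txn = j := by
  induction L with
  | nil => simp [txnOrder] at hj
  | cons e t ih =>
    rcases List.mem_cons.mp hj with rfl | hj
    · exact ⟨e, List.mem_cons_self, rfl⟩
    · obtain ⟨x, hx, rfl⟩ := ih (List.mem_of_mem_filter hj)
      exact ⟨x, List.mem_cons_of_mem _ hx, rfl⟩

lemma proj_cons (j : ℕ) (e : Event) (t : History) :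
    proj j (e :: t) = if e.txn = j then e :: proj j t else proj j t := by
  by_cases h : e.txn = j <;> simp [proj, h]

lemma txn_of_mem_proj {j : ℕ} {S : History} {x : Event} (hx : x ∈ proj j S) : x.txn = j := by
  simpa [proj] using (List.mem_filter.mp hx).2

lemma proj_eq_nil {j : ℕ} {t : History} (h : ∀ x ∈ t, x.txn ≠ j) : proj j t = [] :=
  List.filter_eq_nil_iff.mpr fun x hx => by simpa using h x hx

lemma proj_append_flatMap_txnOrder_filter {a : ℕ} {t : History}
    (ht : ∀ x ∈ t, x.txn = a → ∃ e' t', t = e' :: t' ∧ e'.txn = a) :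
    proj a t ++ ((txnOrder t).filter (· ≠ a)).flatMap (proj · t) =
      (txnOrder t).flatMap (proj · t) := by
  by_cases hocc : ∃ x ∈ t, x.txn = a
  · obtain ⟨x, hx, hxa⟩ := hocc
    obtain ⟨e', t', rfl, rfl⟩ := ht x hx hxa
    simp [txnOrder, List.filter_filter]
  · push Not at hocc
    rw [proj_eq_nil hocc, List.nil_append, List.filter_eq_self.mpr]
    intro j hj
    obtain ⟨x, hx, rfl⟩ := mem_txnOrder hj
    simpa using hocc x hx

theorem NonInterleaved.flatMap_txnOrder_proj {S : History} (h : NonInterleaved S) :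
    (txnOrder S).flatMap (proj · S) = S := by
  induction S with
  | nil => rfl
  | cons e t ih =>
    have hproj : ∀ j ∈ (txnOrder t).filter (· ≠ e.txn), proj j (e :: t) = proj j t :=
      fun j hj => by
        rw [proj_cons, if_neg (Ne.symm (by simpa using (List.mem_filter.mp hj).2))]
    have hblock : ∀ x ∈ t, x.txn = e.txn → ∃ e' t', t = e' :: t' ∧ e'.txn = e.txn := by
      intro x hx hxe
      obtain ⟨e', t', rfl⟩ := List.exists_cons_of_ne_nil (List.ne_nil_of_mem hx)
      exact ⟨e', t', rfl, h.txn_head_eq hx hxe⟩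
    rw [txnOrder, List.flatMap_cons, List.flatMap_congr hproj, proj_cons, if_pos rfl,
      List.cons_append, proj_append_flatMap_txnOrder_filter hblock, ih h.tail]

theorem NonInterleaved.flatMap_txnOrder_restrictTxns {S : History} (h : NonInterleaved S)
    (T : Set ℕ) :
    (txnOrder S).flatMap (fun j => if j ∈ T then proj j S else []) = restrictTxns S T := by
  conv_rhs => rw [restrictTxns, ← h.flatMap_txnOrder_proj, List.filter_flatMap]
  refine List.flatMap_congr fun j _ => ?_
  split_ifs with hj
  · refine (List.filter_eq_self.mpr fun x hx => ?_).symm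
    simpa [txn_of_mem_proj hx] using hj
  · refine (List.filter_eq_nil_iff.mpr fun x hx => ?_).symm
    simpa [txn_of_mem_proj hx] using hj

lemma buildLUVis_excluding_eq_Vis (E : Set History) (H : History) {S : History}
    (hS : sequential S) (i : ℕ) : buildLUVis E H S i (fun _ => False) = Vis S i := by
  rw [Vis, ← hS.nonInterleaved.flatMap_txnOrder_restrictTxns]
  refine List.flatMap_congr fun j _ => ?_
  by_cases hj : j = i ∨ (committed S j ∧ rtPrec S j i) <;> simp [hj]

theorem opaque_implies_lastUse_opaque_general
    (E : Set History) (H : History)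
    (hop : isOpaque H) : lastUseOpaque E H := by
  intro P hP
  obtain ⟨C, S, hC, hS, hSC, hrt, hlegal⟩ := hop P hP
  refine ⟨C, S, hC, hS, hSC, hrt, fun i hi _ => hlegal i hi, fun i hi _ => ⟨fun _ => False, ?_⟩⟩
  rw [buildLUVis_excluding_eq_Vis E P hS i]
  exact hlegal i hi

/-- Every opaque history is last-use opaque: for every
prefix-closed `E` and every `H ∈ E`, if `H` is opaque then `H` is last-use
opaque w.r.t. `E`. -/
theorem opaque_implies_lastUse_opaque
    (E : Set History) (hE : prefixClosed E) (H : History) (hH : H ∈ E)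
    (hop : isOpaque H) : lastUseOpaque E H :=
  opaque_implies_lastUse_opaque_general E H hop

end TM
end

section
/- There exists a prefix-closed set 𝓔 of histories and a history H ∈ 𝓔 such that H is last-use opaque with respect to 𝓔 but H does not avoid cascading aborts (H is not ACA). -/
/-!
The witness is a dirty read: `T₁` writes `1` to `x₀` and, while `T₁` is still live, `T₂` reads
that value, so the history is not ACA. The program `E` consists of the prefixes of this history,
so no history of `E` extends `T₁` by another write to `x₀`: `T₁` has decided on `x₀`.
Every prefix is serialized by aborting both transactions and putting `T₁` before `T₂`. Until the
read returns, nothing has been read and every transaction is trivially legal. Afterwards `T₂` is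
last-use legal: `T₁ ≺_S T₂` although not `T₁ ≺_H T₂`, so `LUVis(S, T₂)` may contain `S⌊^T₁`, in
which the write of `T₁` is committed and justifies the read.
-/

namespace TM

section Projections

variable {H : History} {i j : ℕ} {e : Event}

lemma mem_proj : e ∈ proj i H ↔ e ∈ H ∧ e.txn = i := by
  simp [proj]

lemma proj_append (i : ℕ) (H₁ H₂ : History) : proj i (H₁ ++ H₂) = proj i H₁ ++ proj i H₂ :=
  List.filter_append ..

lemma proj_eq_self (h : ∀ e ∈ H, e.txn = i) : proj i H = H :=
  List.filter_eq_self.mpr (by simpa using h)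

lemma proj_eq_nil_s18 (h : ∀ e ∈ H, e.txn ≠ i) : proj i H = [] :=
  List.filter_eq_nil_iff.mpr (by simpa using h)

lemma proj_proj (i j : ℕ) (H : History) :
    proj i (proj j H) = if i = j then proj j H else [] := by
  split_ifs with h
  · exact proj_eq_self fun e he => h ▸ (mem_proj.mp he).2
  · exact proj_eq_nil_s18 fun e he => (mem_proj.mp he).2 ▸ Ne.symm h

lemma res_committed_mem_of_committed (h : committed H i) :
    Event.res i Resp.committed ∈ H :=
  (mem_proj.mp (h.subset (by simp))).1

lemma inTxn_iff : inTxn H i ↔ ∃ e ∈ H, e.txn = i := by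
  simp [inTxn, proj, List.filter_eq_nil_iff]

lemma rtPrec_left_mem (h : rtPrec H i j) : ∃ e ∈ H, e.txn = i := by
  obtain ⟨k, -, -, ⟨e, he, rfl⟩, -⟩ := h
  exact ⟨e, List.mem_of_getElem? he, rfl⟩

lemma rtPrec_right_mem (h : rtPrec H i j) : ∃ e ∈ H, e.txn = j := by
  obtain ⟨-, l, -, -, ⟨e, he, rfl⟩, -⟩ := h
  exact ⟨e, List.mem_of_getElem? he, rfl⟩

lemma rtPrec_ne (h : rtPrec H i j) : i ≠ j := by
  rintro rfl
  obtain ⟨k, l, hkl, -, ⟨e, he, hte⟩, hk, -⟩ := h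
  exact absurd (hk l e he hte) (by omega)

lemma not_rtPrec_of_getElem? {k l : ℕ} {e' : Event}
    (hk : H[k]? = some e) (hte : e.txn = i) (hl : H[l]? = some e') (hte' : e'.txn = j)
    (hlk : l ≤ k) : ¬ rtPrec H i j := by
  rintro ⟨k', l', hkl, -, -, hk', hl'⟩
  have := hk' k e hk hte
  have := hl' l e' hl hte'
  omega

lemma not_rtPrec_of_head (he : H.head? = some e)
    (hte : e.txn = j) : ¬ rtPrec H i j := by
  rintro ⟨k, l, hkl, -, -, -, hl⟩
  exact absurd (hl 0 e (List.head?_eq_getElem? ▸ he) hte) (by omega)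

lemma rtPrec_append {A B : History} {a b : ℕ} (hab : a ≠ b) (hA : A ≠ []) (hB : B ≠ [])
    (hAa : ∀ e ∈ A, e.txn = a) (hBb : ∀ e ∈ B, e.txn = b) : rtPrec (A ++ B) a b := by
  have hA₀ : 0 < A.length := List.length_pos_iff.mpr hA
  refine ⟨A.length - 1, A.length, by omega, ⟨A.getLast hA, ?_, hAa _ (A.getLast_mem hA)⟩,
    ⟨B.head hB, ?_, hBb _ (B.head_mem hB)⟩, ?_, ?_⟩
  · rw [List.getElem?_append_left (by omega), List.getLast_eq_getElem]
    exact List.getElem?_eq_getElem _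
  · rw [List.getElem?_append_right le_rfl, Nat.sub_self, ← List.head?_eq_getElem?,
      List.head?_eq_some_head]
  · intro m e hm hte
    by_contra! hlt
    rw [List.getElem?_append_right (by omega)] at hm
    exact hab (hte ▸ hBb e (List.mem_of_getElem? hm))
  · intro m e hm hte
    by_contra! hlt
    rw [List.getElem?_append_left hlt] at hm
    exact hab (hAa e (List.mem_of_getElem? hm) ▸ hte)

lemma sequential_append {A B : History} {a b : ℕ} (hab : a ≠ b)
    (hAa : ∀ e ∈ A, e.txn = a) (hBb : ∀ e ∈ B, e.txn = b) : sequential (A ++ B) := by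
  have hblock : ∀ k, inTxn (A ++ B) k → (k = a ∧ A ≠ []) ∨ (k = b ∧ B ≠ []) := by
    intro k hk
    obtain ⟨e, he, rfl⟩ := inTxn_iff.mp hk
    rcases List.mem_append.mp he with h | h
    · exact Or.inl ⟨hAa e h, List.ne_nil_of_mem h⟩
    · exact Or.inr ⟨hBb e h, List.ne_nil_of_mem h⟩
  intro i j hi hj hij
  rcases hblock i hi with ⟨rfl, hA⟩ | ⟨rfl, hB⟩ <;>
    rcases hblock j hj with ⟨rfl, hA'⟩ | ⟨rfl, hB'⟩
  · exact absurd rfl hij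
  · exact Or.inl (rtPrec_append hab hA hB' hAa hBb)
  · exact Or.inr (rtPrec_append hab hA' hB hAa hBb)
  · exact absurd rfl hij

end Projections

lemma wellFormedTxn_nil (i : ℕ) : wellFormedTxn [] i :=
  ⟨by simp, by simp, by simp, by simp⟩

lemma wellFormedTxn_init_op {i : ℕ} {o : Op} {r : Resp} (ho : o ≠ Op.tryCommit ∧ o ≠ Op.tryAbort)
    (hr : r ≠ Resp.committed ∧ r ≠ Resp.aborted) :
    wellFormedTxn [Event.inv i Op.init, Event.res i Resp.ok, Event.inv i o, Event.res i r] i := by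
  have hlen : ∀ {k e}, [Event.inv i Op.init, Event.res i Resp.ok, Event.inv i o,
      Event.res i r][k]? = some e → k < 4 := fun h => (List.getElem?_eq_some_iff.mp h).1
  refine ⟨fun k e hk => ?_, fun _ => rfl, fun k hk => ?_, fun k o' hk ho' => ?_⟩
  · have := hlen hk
    interval_cases k <;> simp at hk <;> subst hk <;> simp [isInvEvent, isResEvent]
  · rcases hk with hk | hk <;> have := hlen hk <;> interval_cases k <;> simp_all
  · have := hlen hk
    rcases ho' with rfl | rfl <;> interval_cases k <;> simp_all

lemma isLegal_of_forall_value_not_mem {L : History} (h : ∀ t v, Event.res t (Resp.value v) ∉ L) :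
    isLegal L := by
  rintro i x v ki kr ⟨-, -, hr, -⟩
  exact absurd (List.mem_of_getElem? hr) (h i v)

lemma mem_proj_of_mem_buildLUVis {E : Set History} {H S : History} {i : ℕ} {e : Event}
    (hS : ∀ j, ¬ committed S j) (he : e ∈ buildLUVis E H S i fun _ => False) :
    e ∈ proj i S := by
  obtain ⟨j, -, hj⟩ := List.mem_flatMap.mp he
  split_ifs at hj with h₁ h₂
  · rcases h₁ with rfl | ⟨hc, -⟩
    · exact hj
    · exact absurd hc (hS j)
  · exact h₂.2.2.2.2.elim
  · simp at hj

lemma lastUseLegal_of_forall_value_not_mem {E : Set History} {H S : History} {i : ℕ}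
    (hS : ∀ j, ¬ committed S j) (hi : ∀ t v, Event.res t (Resp.value v) ∉ proj i S) :
    lastUseLegal E H S i :=
  ⟨fun _ => False, isLegal_of_forall_value_not_mem fun t v he =>
    hi t v (mem_proj_of_mem_buildLUVis hS he)⟩

def prefixes (H : History) : Set History := {P | P <+: H}

lemma prefixClosed_prefixes (H : History) : prefixClosed (prefixes H) :=
  fun _ hP _ hQ => hQ.trans hP

lemma closingWrite_prefixes {H : History} {i x v ki kr : ℕ}
    (hw : opExec H i ki kr (Op.write x v) Resp.ok)
    (hlast : ∀ m v', H[m]? = some (Event.inv i (Op.write x v')) → m ≤ ki) :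
    closingWrite (prefixes H) H i x v ki kr :=
  ⟨hw, fun _ hH' hHH' => hHH'.eq_of_length (le_antisymm hHH'.length_le hH'.length_le) ▸ hlast⟩

/-- The events by which `Compl(H)` extends `H|T_i` when `T_i` is live and has not invoked
`tryC_i`. -/
def abortSuffix (H : History) (i : ℕ) : History :=
  match (proj i H).getLast? with
  | none => []
  | some (.inv _ _) => [Event.res i Resp.aborted]
  | some (.res _ _) => [Event.inv i Op.tryCommit, Event.res i Resp.aborted]

def abortCompletion (H : History) (a b : ℕ) : History :=
  H ++ abortSuffix H a ++ abortSuffix H b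

def abortSerialization (H : History) (a b : ℕ) : History :=
  proj a (abortCompletion H a b) ++ proj b (abortCompletion H a b)

def NoEndEvents (H : History) : Prop :=
  ∀ t, Event.inv t Op.tryCommit ∉ H ∧ Event.res t Resp.committed ∉ H ∧
    Event.res t Resp.aborted ∉ H

lemma NoEndEvents.mono {H P : History} (h : NoEndEvents H) (hP : P ⊆ H) : NoEndEvents P :=
  fun t => ⟨fun h' => (h t).1 (hP h'), fun h' => (h t).2.1 (hP h'), fun h' => (h t).2.2 (hP h')⟩

section AbortCompletion

variable {H : History} {a b i : ℕ}

lemma mem_abortSuffix {e : Event} (he : e ∈ abortSuffix H i) :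
    e = Event.inv i Op.tryCommit ∨ e = Event.res i Resp.aborted := by
  unfold abortSuffix at he
  split at he <;> simp_all

lemma txn_of_mem_abortSuffix : ∀ e ∈ abortSuffix H i, e.txn = i := fun _ he => by
  rcases mem_abortSuffix he with rfl | rfl <;> rfl

lemma abortSuffix_eq_nil (h : proj i H = []) : abortSuffix H i = [] := by
  simp [abortSuffix, h]

lemma aborted_mem_abortSuffix (h : proj i H ≠ []) :
    Event.res i Resp.aborted ∈ abortSuffix H i := by
  unfold abortSuffix
  split <;> simp_all

lemma proj_abortSuffix_of_ne {j : ℕ} (h : i ≠ j) : proj i (abortSuffix H j) = [] :=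
  proj_eq_nil_s18 fun e he => txn_of_mem_abortSuffix e he ▸ Ne.symm h

lemma proj_abortCompletion (hab : a ≠ b) (htxn : ∀ e ∈ H, e.txn = a ∨ e.txn = b) (i : ℕ) :
    proj i (abortCompletion H a b) = proj i H ++ abortSuffix H i := by
  simp only [abortCompletion, proj_append]
  by_cases ha : i = a
  · subst ha
    rw [proj_eq_self txn_of_mem_abortSuffix, proj_abortSuffix_of_ne hab, List.append_nil]
  by_cases hb : i = b
  · subst hb
    rw [proj_eq_self txn_of_mem_abortSuffix, proj_abortSuffix_of_ne ha, List.append_nil]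
  have hH : proj i H = [] := proj_eq_nil_s18 fun e he => by rcases htxn e he with h | h <;> omega
  rw [proj_abortSuffix_of_ne ha, proj_abortSuffix_of_ne hb, hH, abortSuffix_eq_nil hH,
    List.append_nil]

lemma txn_of_mem_abortCompletion (htxn : ∀ e ∈ H, e.txn = a ∨ e.txn = b) :
    ∀ e ∈ abortCompletion H a b, e.txn = a ∨ e.txn = b := by
  intro e he
  rcases List.mem_append.mp he with he | he
  · rcases List.mem_append.mp he with he | he
    · exact htxn e he
    · exact Or.inl (txn_of_mem_abortSuffix e he)
  · exact Or.inr (txn_of_mem_abortSuffix e he)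

lemma isCompletion_abortCompletion (hab : a ≠ b) (htxn : ∀ e ∈ H, e.txn = a ∨ e.txn = b)
    (hend : NoEndEvents H) : isCompletion H (abortCompletion H a b) := by
  have hproj := proj_abortCompletion hab htxn
  have hin : ∀ i, inTxn (abortCompletion H a b) i → inTxn H i := by
    intro i hi hH
    rw [inTxn, hproj, hH, abortSuffix_eq_nil hH] at hi
    exact hi rfl
  refine ⟨⟨abortSuffix H a ++ abortSuffix H b, by simp [abortCompletion]⟩, hin,
    fun i hi => Or.inr ?_, fun i hi => ?_⟩
  · rw [aborted, hproj]
    exact List.mem_append_right _ (aborted_mem_abortSuffix (hin i hi))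
  have hnc : ¬ committed H i := fun h => (hend i).2.1 (res_committed_mem_of_committed h)
  have hna : ¬ aborted H i := fun h => (hend i).2.2 (mem_proj.mp h).1
  obtain ⟨e, he⟩ : ∃ e, (proj i H).getLast? = some e :=
    Option.ne_none_iff_exists'.mp (by rwa [Ne, List.getLast?_eq_none_iff])
  refine ⟨fun h => (h.elim hnc hna).elim, fun _ _ => ⟨?_, ?_, ?_⟩⟩ <;> rw [hproj]
  · intro hp
    exact absurd (mem_proj.mp (List.mem_of_getLast? hp)).1 (hend i).1
  · rintro ⟨o, -, ho⟩
    rw [pendingInv] at ho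
    simp [abortSuffix, ho]
  · intro hpend
    cases e with
    | inv t o =>
      have ht : t = i := (mem_proj.mp (List.mem_of_getLast? he)).2
      exact absurd ⟨o, ht ▸ he⟩ hpend
    | res t r => simp [abortSuffix, he]

end AbortCompletion

section AbortSerialization

variable {H : History} {a b : ℕ}

lemma mem_abortSerialization {e : Event} (he : e ∈ abortSerialization H a b) :
    e ∈ H ∨ ∃ t, e = Event.inv t Op.tryCommit ∨ e = Event.res t Resp.aborted := by
  have hC : e ∈ abortCompletion H a b := by
    rcases List.mem_append.mp he with he | he <;> exact (mem_proj.mp he).1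
  rcases List.mem_append.mp hC with hC | hb
  · rcases List.mem_append.mp hC with hH | ha
    · exact Or.inl hH
    · exact Or.inr ⟨a, mem_abortSuffix ha⟩
  · exact Or.inr ⟨b, mem_abortSuffix hb⟩

lemma not_committed_abortSerialization (hend : NoEndEvents H) (i : ℕ) :
    ¬ committed (abortSerialization H a b) i := by
  intro h
  rcases mem_abortSerialization (res_committed_mem_of_committed h) with h | ⟨t, h | h⟩
  · exact (hend i).2.1 h
  all_goals cases h

lemma value_not_mem_abortSerialization {t v : ℕ} (h : Event.res t (Resp.value v) ∉ H) :
    Event.res t (Resp.value v) ∉ abortSerialization H a b := fun hS => by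
  rcases mem_abortSerialization hS with h' | ⟨t', h' | h'⟩
  · exact h h'
  all_goals cases h'

lemma equivH_abortSerialization (hab : a ≠ b) (htxn : ∀ e ∈ H, e.txn = a ∨ e.txn = b) :
    equivH (abortSerialization H a b) (abortCompletion H a b) := by
  intro i
  simp only [abortSerialization, proj_append, proj_proj]
  split_ifs with ha hb hb
  · exact absurd (ha ▸ hb) hab
  · rw [ha, List.append_nil]
  · rw [hb, List.nil_append]
  · refine (proj_eq_nil_s18 fun e he => ?_).symm
    rcases txn_of_mem_abortCompletion htxn e he with h | h <;> omega

lemma preservesRT_abortSerialization (hab : a ≠ b) (htxn : ∀ e ∈ H, e.txn = a ∨ e.txn = b)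
    (hhead : ∀ e ∈ H.head?, e.txn = a) : preservesRT H (abortSerialization H a b) := by
  intro i j h
  obtain ⟨ei, hei, rfl⟩ := rtPrec_left_mem h
  obtain ⟨ej, hej, rfl⟩ := rtPrec_right_mem h
  have hj : ej.txn = b := by
    refine (htxn ej hej).resolve_left fun hja => not_rtPrec_of_head
      (H.head?_eq_some_head (List.ne_nil_of_mem hei)) ?_ h
    exact (hhead _ (List.head?_eq_some_head _)).trans hja.symm
  have hi : ei.txn = a := (htxn ei hei).resolve_right (hj ▸ rtPrec_ne h)
  have hC : ∀ e ∈ H, e ∈ proj e.txn (abortCompletion H a b) := fun e he =>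
    mem_proj.mpr ⟨List.mem_append_left _ (List.mem_append_left _ he), rfl⟩
  rw [hi, hj]
  exact rtPrec_append hab (List.ne_nil_of_mem (hi ▸ hC ei hei))
    (List.ne_nil_of_mem (hj ▸ hC ej hej)) (fun _ he => (mem_proj.mp he).2)
    (fun _ he => (mem_proj.mp he).2)

theorem finalStateLUOpaque_of_lastUseLegal_abortSerialization {E : Set History} (hab : a ≠ b)
    (htxn : ∀ e ∈ H, e.txn = a ∨ e.txn = b) (hhead : ∀ e ∈ H.head?, e.txn = a)
    (hend : NoEndEvents H) (hLU : ∀ i, lastUseLegal E H (abortSerialization H a b) i) :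
    finalStateLUOpaque E H :=
  ⟨_, _, isCompletion_abortCompletion hab htxn hend,
    sequential_append hab (fun _ he => (mem_proj.mp he).2) (fun _ he => (mem_proj.mp he).2),
    equivH_abortSerialization hab htxn, preservesRT_abortSerialization hab htxn hhead,
    fun i _ hc => absurd hc (not_committed_abortSerialization hend i), fun i _ _ => hLU i⟩

end AbortSerialization

def dirtyRead : History :=
  [Event.inv 1 Op.init, Event.res 1 Resp.ok, Event.inv 2 Op.init,
   Event.inv 1 (Op.write 0 1), Event.res 1 Resp.ok,
   Event.res 2 Resp.ok, Event.inv 2 (Op.read 0), Event.res 2 (Resp.value 1)]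

lemma txn_of_mem_dirtyRead : ∀ e ∈ dirtyRead, e.txn = 1 ∨ e.txn = 2 := by
  decide

lemma noEndEvents_dirtyRead : NoEndEvents dirtyRead := by
  intro t
  simp [dirtyRead]

lemma wellFormed_dirtyRead : wellFormed dirtyRead := by
  intro i
  by_cases h₁ : i = 1
  · subst h₁
    exact wellFormedTxn_init_op (o := Op.write 0 1) (r := Resp.ok) (by simp) (by simp)
  by_cases h₂ : i = 2
  · subst h₂
    exact wellFormedTxn_init_op (o := Op.read 0) (r := Resp.value 1) (by simp) (by simp)
  rw [proj_eq_nil_s18 fun e he => by rcases txn_of_mem_dirtyRead e he with h | h <;> omega]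
  exact wellFormedTxn_nil i

lemma uniqueWrites_dirtyRead : uniqueWrites dirtyRead := by
  intro k₁ k₂ i₁ i₂ x₁ x₂ v₁ v₂ h₁ h₂
  have hlen : ∀ {k e}, dirtyRead[k]? = some e → k < 8 := fun h =>
    (List.getElem?_eq_some_iff.mp h).1
  have := hlen h₁
  have := hlen h₂
  interval_cases k₁ <;> simp [dirtyRead] at h₁
  interval_cases k₂ <;> simp [dirtyRead] at h₂
  omega

lemma not_ACA_dirtyRead : ¬ ACA dirtyRead := by
  intro h
  obtain ⟨m, hm, hres⟩ := h 1 2 0 1 3 4 6 7 (by omega)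
    ⟨by omega, rfl, rfl, fun m _ _ _ _ => by omega⟩
    ⟨by omega, rfl, rfl, fun m _ _ _ _ => by omega⟩
  interval_cases m <;> simp [dirtyRead] at hres

lemma decidedOn_dirtyRead : decidedOn (prefixes dirtyRead) dirtyRead 1 0 := by
  refine ⟨1, 3, 4, closingWrite_prefixes ⟨by omega, rfl, rfl, fun m e _ _ _ => by omega⟩ ?_⟩
  intro m v' hm
  have : m < 8 := (List.getElem?_eq_some_iff.mp hm).1
  interval_cases m <;> simp [dirtyRead] at hm ⊢

lemma abortSerialization_dirtyRead : abortSerialization dirtyRead 1 2 =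
    [Event.inv 1 Op.init, Event.res 1 Resp.ok, Event.inv 1 (Op.write 0 1),
     Event.res 1 Resp.ok, Event.inv 1 Op.tryCommit, Event.res 1 Resp.aborted,
     Event.inv 2 Op.init, Event.res 2 Resp.ok, Event.inv 2 (Op.read 0),
     Event.res 2 (Resp.value 1), Event.inv 2 Op.tryCommit, Event.res 2 Resp.aborted] := by
  decide

lemma lastUseProj_dirtyRead :
    lastUseProj (prefixes dirtyRead) dirtyRead (abortSerialization dirtyRead 1 2) 1 =
      [Event.inv 1 Op.init, Event.res 1 Resp.ok, Event.inv 1 (Op.write 0 1),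
       Event.res 1 Resp.ok] := by
  have hT₁ : proj 1 (abortSerialization dirtyRead 1 2) =
      [Event.inv 1 Op.init, Event.res 1 Resp.ok, Event.inv 1 (Op.write 0 1),
       Event.res 1 Resp.ok, Event.inv 1 Op.tryCommit, Event.res 1 Resp.aborted] := by
    decide
  rw [lastUseProj, hT₁, seqOfIdx, List.filter_congr (q := fun k => decide (k < 4))]
  · rfl
  intro k hk
  simp only [List.length_cons, List.length_nil, List.mem_range] at hk
  interval_cases k <;> simp [completeAt, eventVarAt, opVar, decidedOn_dirtyRead]

/-- `LUVis(S, T₂)` for the serialization `S` of `dirtyRead`, with `S⌊^T₁` included. -/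
def dirtyReadLUVis : History :=
  [Event.inv 1 Op.init, Event.res 1 Resp.ok, Event.inv 1 (Op.write 0 1),
   Event.res 1 Resp.ok, Event.inv 1 Op.tryCommit, Event.res 1 Resp.committed,
   Event.inv 2 Op.init, Event.res 2 Resp.ok, Event.inv 2 (Op.read 0),
   Event.res 2 (Resp.value 1), Event.inv 2 Op.tryCommit, Event.res 2 Resp.aborted]

lemma buildLUVis_dirtyRead :
    buildLUVis (prefixes dirtyRead) dirtyRead (abortSerialization dirtyRead 1 2) 2
      (fun _ => True) = dirtyReadLUVis := by
  have hrt : rtPrec (abortSerialization dirtyRead 1 2) 1 2 :=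
    rtPrec_append (by decide) (by decide) (by decide) (fun _ he => (mem_proj.mp he).2)
      (fun _ he => (mem_proj.mp he).2)
  have hnrt : ¬ rtPrec dirtyRead 1 2 :=
    not_rtPrec_of_getElem? (k := 3) (l := 2) rfl rfl rfl rfl (by omega)
  have hdec : ∃ x, decidedOn (prefixes dirtyRead) dirtyRead 1 x := ⟨0, decidedOn_dirtyRead⟩
  have horder : txnOrder (abortSerialization dirtyRead 1 2) = [1, 2] := by
    rw [abortSerialization_dirtyRead]
    rfl
  unfold buildLUVis
  simp [horder, hrt, hnrt, hdec, not_committed_abortSerialization noEndEvents_dirtyRead,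
    lastUseProjC, lastUseProj_dirtyRead]
  rw [abortSerialization_dirtyRead]
  rfl

lemma isLegal_dirtyReadLUVis : isLegal dirtyReadLUVis := by
  have hlen : ∀ {k e}, dirtyReadLUVis[k]? = some e → k < 12 := fun h =>
    (List.getElem?_eq_some_iff.mp h).1
  rintro i x v ki kr ⟨hkr, hinv, hres, -⟩
  have := hlen hinv
  interval_cases ki <;> simp [dirtyReadLUVis] at hinv
  obtain ⟨rfl, rfl⟩ := hinv
  have := hlen hres
  interval_cases kr <;> simp [dirtyReadLUVis] at hres hkr
  subst hres
  refine Or.inl ⟨1, 2, 3, by omega, ⟨by omega, rfl, rfl, fun m _ _ _ _ => by omega⟩, ?_⟩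
  rintro j v' kwi kwr ⟨hlt, hwinv, -, hgap⟩ -
  have := hlen hwinv
  interval_cases kwi <;> simp [dirtyReadLUVis] at hwinv
  obtain ⟨rfl, -⟩ := hwinv
  by_contra! h
  exact hgap 3 _ (by omega) h rfl rfl

lemma lastUseLegal_dirtyRead (i : ℕ) :
    lastUseLegal (prefixes dirtyRead) dirtyRead (abortSerialization dirtyRead 1 2) i := by
  by_cases hi : i = 2
  · subst hi
    exact ⟨fun _ => True, buildLUVis_dirtyRead ▸ isLegal_dirtyReadLUVis⟩
  refine lastUseLegal_of_forall_value_not_mem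
    (not_committed_abortSerialization noEndEvents_dirtyRead) fun t v he => hi ?_
  rw [mem_proj, abortSerialization_dirtyRead] at he
  simp [Event.txn] at he
  omega

lemma value_not_mem_of_prefix_dirtyRead {P : History} (hP : P <+: dirtyRead)
    (hne : P ≠ dirtyRead) (t v : ℕ) : Event.res t (Resp.value v) ∉ P := by
  have hP₇ : P <+: dirtyRead.take 7 := by
    refine List.prefix_take_iff.mpr ⟨hP, ?_⟩
    have := hP.length_le
    have := mt hP.eq_of_length hne
    simp only [dirtyRead, List.length_cons, List.length_nil] at *
    omega
  exact fun h => by simpa [dirtyRead] using hP₇.subset h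

lemma lastUseOpaque_dirtyRead : lastUseOpaque (prefixes dirtyRead) dirtyRead := by
  intro P hP
  have hend : NoEndEvents P := noEndEvents_dirtyRead.mono hP.subset
  refine finalStateLUOpaque_of_lastUseLegal_abortSerialization (a := 1) (b := 2) (by decide)
    (fun e he => txn_of_mem_dirtyRead e (hP.subset he)) ?_ hend ?_
  · rw [List.prefix_iff_eq_take.mp hP, List.head?_take]
    split_ifs <;> simp [dirtyRead, Event.txn]
  by_cases hfull : P = dirtyRead
  · exact hfull ▸ lastUseLegal_dirtyRead
  exact fun i => lastUseLegal_of_forall_value_not_mem (not_committed_abortSerialization hend)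
    fun t v he => value_not_mem_abortSerialization (value_not_mem_of_prefix_dirtyRead hP hfull t v)
      (mem_proj.mp he).1

/-- There exists a prefix-closed set `E` of histories and a
(well-formed, unique-writes) history `H ∈ E` that is last-use opaque w.r.t.
`E` but does not avoid cascading aborts. -/
theorem lastUse_opaque_not_ACA :
    ∃ (E : Set History) (H : History),
      prefixClosed E ∧ H ∈ E ∧ wellFormed H ∧ uniqueWrites H ∧
      lastUseOpaque E H ∧ ¬ ACA H :=
  ⟨prefixes dirtyRead, dirtyRead, prefixClosed_prefixes dirtyRead, List.prefix_refl _,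
    wellFormed_dirtyRead, uniqueWrites_dirtyRead, lastUseOpaque_dirtyRead, not_ACA_dirtyRead⟩

end TM
end
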